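/- arXiv:1810.01348 — 3 statements merged into one kernel-verified Lean document; each statement's English description precedes it below -/
import Mathlib

section
/- Under the assumptions that M is covered by ν balls of radius ε/(8C₂) with centers Φⱼ ∈ M, and J, J_N are C₂-Lipschitz on M, J_N being a random function, the probability that the generalization error exceeds ε is bounded: P[E_gen > ε] ≤ Σ_{j=1}^{ν} P[|J(Φⱼ) − J_N(Φⱼ)| > ε/4] ≤ ν · max_{1≤j≤ν} P[|J(Φⱼ) − J_N(Φⱼ)| > ε/4]. -/
open MeasureTheory

/-- Lemma 4.16 / Theorem 4.12 (union-bound step): the probability that the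
generalization error exceeds `ε` is bounded by the sum (and hence `ν` times the
maximum) of the probabilities that `|J (Φc j) - J_N (Φc j)| > ε/4` at the covering
centers. -/
theorem stmt4 {V : Type*} [NormedAddCommGroup V]
    {Ω : Type*} [MeasurableSpace Ω] (P : Measure Ω) [IsProbabilityMeasure P]
    (M : Set V) (ε C₂ : ℝ) (hε : 0 < ε) (hC : 0 < C₂)
    (ν : ℕ) (hν : 0 < ν) (Φc : Fin ν → V) (hΦc : ∀ j, Φc j ∈ M)
    (hcover : ∀ Φ ∈ M, ∃ j, ‖Φ - Φc j‖ < ε / (8 * C₂))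
    (J : V → ℝ) (JN : Ω → V → ℝ)
    (hJ : ∀ Φ ∈ M, ∀ Ψ ∈ M, |J Φ - J Ψ| ≤ C₂ * ‖Φ - Ψ‖)
    (hJN : ∀ᵐ ω ∂P, ∀ Φ ∈ M, ∀ Ψ ∈ M, |JN ω Φ - JN ω Ψ| ≤ C₂ * ‖Φ - Ψ‖)
    (ΦM : V) (hΦM : ΦM ∈ M) (hmin : ∀ Φ ∈ M, J ΦM ≤ J Φ)
    (ΦMN : Ω → V) (hΦMN : ∀ ω, ΦMN ω ∈ M)
    (hminN : ∀ ω, ∀ Φ ∈ M, JN ω (ΦMN ω) ≤ JN ω Φ) :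
    P {ω | J (ΦMN ω) - J ΦM > ε} ≤
        ∑ j : Fin ν, P {ω | |J (Φc j) - JN ω (Φc j)| > ε / 4} ∧
      ∑ j : Fin ν, P {ω | |J (Φc j) - JN ω (Φc j)| > ε / 4} ≤
        (ν : ENNReal) * ⨆ j : Fin ν, P {ω | |J (Φc j) - JN ω (Φc j)| > ε / 4} := by
  constructor
  · -- union bound step
    have hsub : ∀ᵐ ω ∂P, ω ∈ {ω | J (ΦMN ω) - J ΦM > ε} →
        ω ∈ ⋃ j : Fin ν, {ω | |J (Φc j) - JN ω (Φc j)| > ε / 4} := by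
      filter_upwards [hJN] with ω hL hω
      have hω : J (ΦMN ω) - J ΦM > ε := hω
      -- key: for any Φ ∈ M with |J Φ - JN ω Φ| > ε/2, some center witnesses > ε/4
      have main : ∀ Φ ∈ M, |J Φ - JN ω Φ| > ε / 2 →
          ∃ j, |J (Φc j) - JN ω (Φc j)| > ε / 4 := by
        intro Φ hΦ habs
        obtain ⟨j, hj⟩ := hcover Φ hΦ
        refine ⟨j, ?_⟩
        have h2 := hJ Φ hΦ (Φc j) (hΦc j)
        have h3 := hL Φ hΦ (Φc j) (hΦc j)
        have hb : C₂ * ‖Φ - Φc j‖ ≤ ε / 8 := by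
          have h4 : C₂ * ‖Φ - Φc j‖ ≤ C₂ * (ε / (8 * C₂)) :=
            mul_le_mul_of_nonneg_left hj.le hC.le
          have h5 : C₂ * (ε / (8 * C₂)) = ε / 8 := by
            field_simp
          linarith
        have htri : |J Φ - JN ω Φ| ≤
            |J Φ - J (Φc j)| + |J (Φc j) - JN ω (Φc j)| + |JN ω (Φc j) - JN ω Φ| := by
          have e : J Φ - JN ω Φ =
              (J Φ - J (Φc j)) + (J (Φc j) - JN ω (Φc j)) + (JN ω (Φc j) - JN ω Φ) := by
            ring
          rw [e]
          exact (abs_add_le _ _).trans (by gcongr; exact abs_add_le _ _)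
        have hc : |JN ω (Φc j) - JN ω Φ| = |JN ω Φ - JN ω (Φc j)| := abs_sub_comm _ _
        linarith
      have h1 := hminN ω ΦM hΦM
      -- one of the two endpoint discrepancies exceeds ε/2
      rcases lt_or_ge (ε / 2) (J (ΦMN ω) - JN ω (ΦMN ω)) with hcase | hcase
      · obtain ⟨j, hj⟩ := main (ΦMN ω) (hΦMN ω) (lt_of_lt_of_le hcase (le_abs_self _))
        exact Set.mem_iUnion.2 ⟨j, hj⟩
      · have h2 : JN ω ΦM - J ΦM > ε / 2 := by linarith
        have h3 : |J ΦM - JN ω ΦM| > ε / 2 :=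
          lt_of_lt_of_le h2 (by rw [abs_sub_comm]; exact le_abs_self _)
        obtain ⟨j, hj⟩ := main ΦM hΦM h3
        exact Set.mem_iUnion.2 ⟨j, hj⟩
    calc P {ω | J (ΦMN ω) - J ΦM > ε}
        ≤ P (⋃ j : Fin ν, {ω | |J (Φc j) - JN ω (Φc j)| > ε / 4}) :=
          measure_mono_ae hsub
      _ ≤ ∑' j : Fin ν, P {ω | |J (Φc j) - JN ω (Φc j)| > ε / 4} := measure_iUnion_le _
      _ = ∑ j : Fin ν, P {ω | |J (Φc j) - JN ω (Φc j)| > ε / 4} := tsum_fintype _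
  · calc ∑ j : Fin ν, P {ω | |J (Φc j) - JN ω (Φc j)| > ε / 4}
        ≤ ∑ _j : Fin ν, ⨆ j : Fin ν, P {ω | |J (Φc j) - JN ω (Φc j)| > ε / 4} :=
          Finset.sum_le_sum fun j _ =>
            le_iSup (fun i => P {ω | |J (Φc i) - JN ω (Φc i)| > ε / 4}) j
      _ = (ν : ENNReal) * ⨆ j : Fin ν, P {ω | |J (Φc j) - JN ω (Φc j)| > ε / 4} := by
          simp [Finset.sum_const, Finset.card_fin, nsmul_eq_mul]
end

section
/- Let J : V → ℝ be twice differentiable with ‖D²J‖ ≤ Γ globally and γ-strongly convex in a neighbourhood U of its global minimizer Φ*. Let M ⊆ V, let Φ^{(M)} minimize J over M, let Φ^{(M,N)} ∈ M ∩ U, and set E_gen := J(Φ^{(M,N)}) − J(Φ^{(M)}) and E_best := inf_{Φ∈M} ‖Φ* − Φ‖. Then ‖Φ* − Φ^{(M,N)}‖² ≤ (Γ/γ)E_best² + (2/γ)E_gen. -/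
/-- Quadratic upper bound from a bounded second derivative at a critical point. -/
lemma quad_upper {V : Type*} [NormedAddCommGroup V] [InnerProductSpace ℝ V]
    (J : V → ℝ) (Γ : ℝ) (hJ : ContDiff ℝ 2 J)
    (hΓ : ∀ ξ : V, ‖fderiv ℝ (fderiv ℝ J) ξ‖ ≤ Γ)
    (a : V) (ha : fderiv ℝ J a = 0) (x : V) :
    J x ≤ J a + Γ / 2 * ‖x - a‖ ^ 2 := by
  set v := x - a with hv
  have hdJ : Differentiable ℝ J := hJ.differentiable (by norm_num)
  have hdJ' : Differentiable ℝ (fderiv ℝ J) := by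
    have : ContDiff ℝ 1 (fderiv ℝ J) := hJ.fderiv_right (by norm_num)
    exact this.differentiable (by norm_num)
  have hlip : ∀ y : V, ‖fderiv ℝ J y - fderiv ℝ J a‖ ≤ Γ * ‖y - a‖ := fun y =>
    Convex.norm_image_sub_le_of_norm_fderiv_le (fun z _ => hdJ' z)
      (fun z _ => hΓ z) convex_univ trivial trivial
  -- the line and its composition
  have hline : ∀ t : ℝ, HasDerivAt (fun t : ℝ => a + t • v) v t := by
    intro t
    simpa using ((hasDerivAt_id t).smul_const v).const_add a
  set g : ℝ → ℝ := fun t => J (a + t • v) with hg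
  have hg' : ∀ t : ℝ, HasDerivAt g (fderiv ℝ J (a + t • v) v) t := fun t =>
    (hdJ (a + t • v)).hasFDerivAt.comp_hasDerivAt t (hline t)
  have hgbound : ∀ t : ℝ, 0 ≤ t → fderiv ℝ J (a + t • v) v ≤ Γ * ‖v‖ ^ 2 * t := by
    intro t ht
    have h1 : fderiv ℝ J (a + t • v) v = (fderiv ℝ J (a + t • v) - fderiv ℝ J a) v := by
      simp [ha]
    have h2 : ‖(fderiv ℝ J (a + t • v) - fderiv ℝ J a) v‖ ≤
        (Γ * ‖a + t • v - a‖) * ‖v‖ :=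
      le_trans (ContinuousLinearMap.le_opNorm _ v)
        (mul_le_mul_of_nonneg_right (hlip _) (norm_nonneg v))
    have h3 : ‖a + t • v - a‖ = t * ‖v‖ := by
      simp [norm_smul, abs_of_nonneg ht]
    calc fderiv ℝ J (a + t • v) v ≤ ‖(fderiv ℝ J (a + t • v) - fderiv ℝ J a) v‖ := by
          rw [h1]; exact le_abs_self _
      _ ≤ (Γ * (t * ‖v‖)) * ‖v‖ := by rw [← h3]; exact h2
      _ = Γ * ‖v‖ ^ 2 * t := by ring
  set φ : ℝ → ℝ := fun t => Γ / 2 * ‖v‖ ^ 2 * t ^ 2 - g t with hφ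
  have hφ' : ∀ t : ℝ, HasDerivAt φ (Γ / 2 * ‖v‖ ^ 2 * (2 * t) - fderiv ℝ J (a + t • v) v) t := by
    intro t
    exact HasDerivAt.sub (by simpa using (((hasDerivAt_pow 2 t).const_mul (Γ / 2 * ‖v‖ ^ 2))))
      (hg' t)
  have hmono : MonotoneOn φ (Set.Icc (0 : ℝ) 1) := by
    apply monotoneOn_of_deriv_nonneg (convex_Icc 0 1)
    · exact fun t _ => ((hφ' t).continuousAt).continuousWithinAt
    · exact fun t _ => ((hφ' t).differentiableAt).differentiableWithinAt
    · intro t ht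
      rw [interior_Icc] at ht
      rw [(hφ' t).deriv]
      have := hgbound t (le_of_lt ht.1)
      nlinarith [norm_nonneg v]
  have h01 : φ 0 ≤ φ 1 := hmono (by norm_num) (by norm_num) zero_le_one
  have hg0 : g 0 = J a := by simp [hg]
  have hg1 : g 1 = J x := by simp [hg, hv]
  simp only [hφ, hg0, hg1] at h01
  nlinarith [h01]

/-- Lemma 4.21: with `J` twice differentiable, `D²J` bounded by `Γ`, and `J`
`γ`-strongly convex on a neighbourhood `U` of the global minimizer `Φs`, for the
empirical minimizer `ΦMN ∈ M ∩ U` we have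
`‖Φs - ΦMN‖² ≤ (Γ/γ) E_best² + (2/γ) E_gen`. -/
theorem stmt9 {V : Type*} [NormedAddCommGroup V] [InnerProductSpace ℝ V]
    (J : V → ℝ) (Γ γ : ℝ) (hγ : 0 < γ) (hJ : ContDiff ℝ 2 J)
    (hΓ : ∀ ξ : V, ‖fderiv ℝ (fderiv ℝ J) ξ‖ ≤ Γ)
    (U : Set V)
    (hconv : ∀ Φ ∈ U, ∀ Ψ ∈ U,
      J Ψ + fderiv ℝ J Ψ (Φ - Ψ) + γ / 2 * ‖Φ - Ψ‖ ^ 2 ≤ J Φ)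
    (Φs : V) (hΦsU : Φs ∈ U) (hmin : ∀ Φ : V, J Φs ≤ J Φ)
    (M : Set V) (hM : M.Nonempty)
    (ΦM : V) (hΦM : ΦM ∈ M) (hΦMmin : ∀ Φ ∈ M, J ΦM ≤ J Φ)
    (ΦMN : V) (hΦMN : ΦMN ∈ M) (hΦMNU : ΦMN ∈ U) :
    ‖Φs - ΦMN‖ ^ 2 ≤
      Γ / γ * (⨅ Φ : M, ‖Φs - Φ.1‖) ^ 2 + 2 / γ * (J ΦMN - J ΦM) := by
  have hΓ0 : 0 ≤ Γ := le_trans (norm_nonneg (fderiv ℝ (fderiv ℝ J) 0)) (hΓ 0)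
  have h0 : fderiv ℝ J Φs = 0 :=
    (IsLocalMin.fderiv_eq_zero (Filter.Eventually.of_forall hmin))
  -- strong convexity bound
  have hsc : γ / 2 * ‖Φs - ΦMN‖ ^ 2 ≤ J ΦMN - J Φs := by
    have := hconv ΦMN hΦMNU Φs hΦsU
    rw [h0] at this
    simp only [ContinuousLinearMap.zero_apply] at this
    rw [norm_sub_rev]
    linarith
  -- Taylor bound for each Φ ∈ M
  have htay : ∀ Φ : V, J Φ ≤ J Φs + Γ / 2 * ‖Φs - Φ‖ ^ 2 := by
    intro Φ
    have := quad_upper J Γ hJ hΓ Φs h0 Φ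
    rwa [norm_sub_rev]
  set c : ℝ := J ΦM - J Φs with hc
  have hc0 : 0 ≤ c := by simp [hc, sub_nonneg, hmin ΦM]
  have hcbound : ∀ Φ : V, Φ ∈ M → c ≤ Γ / 2 * ‖Φs - Φ‖ ^ 2 := by
    intro Φ hΦ
    have h1 := hΦMmin Φ hΦ
    have h2 := htay Φ
    simp only [hc]
    linarith
  set d : ℝ := ⨅ Φ : M, ‖Φs - Φ.1‖ with hd
  have : Nonempty M := hM.to_subtype
  have hd0 : 0 ≤ d := Real.iInf_nonneg fun Φ => norm_nonneg _
  have hkey : c ≤ Γ / 2 * d ^ 2 := by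
    rcases eq_or_lt_of_le hΓ0 with hΓeq | hΓpos
    · have h := hcbound ΦM hΦM
      rw [← hΓeq] at h ⊢
      nlinarith
    · have hsq : Real.sqrt (2 * c / Γ) ≤ d := by
        apply le_ciInf
        intro Φ
        have h1 := hcbound Φ.1 Φ.2
        have h2 : 2 * c / Γ ≤ ‖Φs - Φ.1‖ ^ 2 := by
          rw [div_le_iff₀ hΓpos] at *
          nlinarith
        calc Real.sqrt (2 * c / Γ) ≤ Real.sqrt (‖Φs - Φ.1‖ ^ 2) := Real.sqrt_le_sqrt h2
          _ = ‖Φs - Φ.1‖ := by rw [Real.sqrt_sq (norm_nonneg _)]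
      have h3 : 2 * c / Γ ≤ d ^ 2 := by
        have := Real.sq_sqrt (by positivity : (0:ℝ) ≤ 2 * c / Γ)
        nlinarith [pow_le_pow_left₀ (Real.sqrt_nonneg (2 * c / Γ)) hsq 2]
      rw [div_le_iff₀ hΓpos] at h3
      linarith
  -- combine
  have hfin : γ / 2 * ‖Φs - ΦMN‖ ^ 2 ≤ (J ΦMN - J ΦM) + Γ / 2 * d ^ 2 := by
    have : J ΦMN - J Φs = (J ΦMN - J ΦM) + c := by rw [hc]; ring
    linarith [hsc]
  have hγ' : γ ≠ 0 := ne_of_gt hγ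
  have hmul := mul_le_mul_of_nonneg_left hfin (le_of_lt (by positivity : (0:ℝ) < 2 / γ))
  calc ‖Φs - ΦMN‖ ^ 2 = 2 / γ * (γ / 2 * ‖Φs - ΦMN‖ ^ 2) := by field_simp
    _ ≤ 2 / γ * ((J ΦMN - J ΦM) + Γ / 2 * d ^ 2) := hmul
    _ = Γ / γ * d ^ 2 + 2 / γ * (J ΦMN - J ΦM) := by field_simp; ring
end

section
/- Under the assumptions of the previous estimate, for any a > 0, on the event {E_gen ≤ (1/2)aΓE_best²} the norm error is quasi-optimal: E_best² ≤ ‖Φ* − Φ^{(M,N)}‖² ≤ (1 + a)(Γ/γ)E_best². In particular P[‖Φ* − Φ^{(M,N)}‖² > (1+a)(Γ/γ)E_best²] ≤ P[E_gen ≥ (1/2)aΓE_best²]. -/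
open MeasureTheory

lemma taylor_upper {V : Type*} [NormedAddCommGroup V] [InnerProductSpace ℝ V]
    (J : V → ℝ) (Γ : ℝ) (hJ : ContDiff ℝ 2 J)
    (hΓ : ∀ ξ : V, ‖fderiv ℝ (fderiv ℝ J) ξ‖ ≤ Γ)
    (Φs : V) (h0 : fderiv ℝ J Φs = 0) (Φ : V) :
    J Φ ≤ J Φs + Γ / 2 * ‖Φ - Φs‖ ^ 2 := by
  set v := Φ - Φs with hv
  have hJ1 : Differentiable ℝ J := hJ.differentiable (by norm_num)
  have hg : Differentiable ℝ (fderiv ℝ J) :=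
    (hJ.fderiv_right (m := 1) (by norm_num)).differentiable one_ne_zero
  have hLip : ∀ x : V, ‖fderiv ℝ J x - fderiv ℝ J Φs‖ ≤ Γ * ‖x - Φs‖ := fun x =>
    convex_univ.norm_image_sub_le_of_norm_fderiv_le
      (fun y _ => hg.differentiableAt) (fun y _ => hΓ y) (Set.mem_univ _) (Set.mem_univ _)
  set φ : ℝ → ℝ := fun t => J (Φs + t • v) - Γ / 2 * (t ^ 2 * ‖v‖ ^ 2) with hφ
  have hline : ∀ t : ℝ, HasDerivAt (fun t : ℝ => Φs + t • v) v t := by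
    intro t
    simpa using ((hasDerivAt_id t).smul_const v).const_add Φs
  have hφd : ∀ t : ℝ, HasDerivAt φ
      ((fderiv ℝ J (Φs + t • v)) v - Γ / 2 * (2 * t * ‖v‖ ^ 2)) t := by
    intro t
    have h1 : HasDerivAt (fun t : ℝ => J (Φs + t • v)) ((fderiv ℝ J (Φs + t • v)) v) t :=
      (hJ1 _).hasFDerivAt.comp_hasDerivAt t (hline t)
    have h2 : HasDerivAt (fun t : ℝ => Γ / 2 * (t ^ 2 * ‖v‖ ^ 2))
        (Γ / 2 * (2 * t * ‖v‖ ^ 2)) t := by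
      have := ((hasDerivAt_pow 2 t).mul_const (‖v‖ ^ 2)).const_mul (Γ / 2)
      convert this using 1
      · rfl
      · rfl
      · norm_num
    exact h1.sub h2
  have hanti : AntitoneOn φ (Set.Icc 0 1) := by
    apply antitoneOn_of_deriv_nonpos (convex_Icc 0 1)
    · exact fun t _ => (hφd t).continuousAt.continuousWithinAt
    · exact fun t _ => (hφd t).differentiableAt.differentiableWithinAt
    · intro t ht
      rw [interior_Icc] at ht
      rw [(hφd t).deriv]
      have hb : (fderiv ℝ J (Φs + t • v)) v ≤ Γ * t * ‖v‖ ^ 2 := by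
        have := (fderiv ℝ J (Φs + t • v) - fderiv ℝ J Φs).le_opNorm v
        have hnn : ‖Φs + t • v - Φs‖ = t * ‖v‖ := by
          simp [norm_smul, abs_of_pos ht.1]
        have := hLip (Φs + t • v)
        rw [hnn] at this
        have h3 : (fderiv ℝ J (Φs + t • v)) v =
            (fderiv ℝ J (Φs + t • v) - fderiv ℝ J Φs) v := by simp [h0]
        rw [h3]
        calc (fderiv ℝ J (Φs + t • v) - fderiv ℝ J Φs) v
            ≤ ‖fderiv ℝ J (Φs + t • v) - fderiv ℝ J Φs‖ * ‖v‖ :=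
              le_trans (le_abs_self _) ((fderiv ℝ J (Φs + t • v) - fderiv ℝ J Φs).le_opNorm v)
          _ ≤ Γ * (t * ‖v‖) * ‖v‖ := by
              apply mul_le_mul_of_nonneg_right ‹_› (norm_nonneg _)
          _ = Γ * t * ‖v‖ ^ 2 := by ring
      nlinarith
  have key := hanti (Set.mem_Icc.mpr ⟨le_refl 0, zero_le_one⟩)
    (Set.mem_Icc.mpr ⟨zero_le_one, le_refl 1⟩) zero_le_one
  simp only [hφ, zero_smul, add_zero, one_smul] at key
  have : Φs + v = Φ := by rw [hv]; abel
  rw [this] at key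
  nlinarith [key]

/-- Corollary 4.22: under the assumptions of Lemma 4.21, for any `a > 0`, on the
event `{E_gen ≤ ½ a Γ E_best²}` the norm error is quasi-optimal,
`E_best² ≤ ‖Φs - Φ^{(M,N)}‖² ≤ (1+a)(Γ/γ) E_best²`; in particular
`P[‖Φs - Φ^{(M,N)}‖² > (1+a)(Γ/γ)E_best²] ≤ P[E_gen ≥ ½ a Γ E_best²]`. -/
theorem stmt10 {V : Type*} [NormedAddCommGroup V] [InnerProductSpace ℝ V]
    {Ω : Type*} [MeasurableSpace Ω] (P : Measure Ω) [IsProbabilityMeasure P]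
    (J : V → ℝ) (Γ γ : ℝ) (hγ : 0 < γ) (hJ : ContDiff ℝ 2 J)
    (hΓ : ∀ ξ : V, ‖fderiv ℝ (fderiv ℝ J) ξ‖ ≤ Γ)
    (U : Set V)
    (hconv : ∀ Φ ∈ U, ∀ Ψ ∈ U,
      J Ψ + fderiv ℝ J Ψ (Φ - Ψ) + γ / 2 * ‖Φ - Ψ‖ ^ 2 ≤ J Φ)
    (Φs : V) (hΦsU : Φs ∈ U) (hmin : ∀ Φ : V, J Φs ≤ J Φ)
    (M : Set V) (hM : M.Nonempty)
    (ΦM : V) (hΦM : ΦM ∈ M) (hΦMmin : ∀ Φ ∈ M, J ΦM ≤ J Φ)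
    (ΦMN : Ω → V) (hΦMN : ∀ ω, ΦMN ω ∈ M) (hΦMNU : ∀ ω, ΦMN ω ∈ U)
    (a : ℝ) (ha : 0 < a) :
    (∀ ω, J (ΦMN ω) - J ΦM ≤ 1 / 2 * a * Γ * (⨅ Φ : M, ‖Φs - Φ.1‖) ^ 2 →
        (⨅ Φ : M, ‖Φs - Φ.1‖) ^ 2 ≤ ‖Φs - ΦMN ω‖ ^ 2 ∧
          ‖Φs - ΦMN ω‖ ^ 2 ≤ (1 + a) * (Γ / γ) * (⨅ Φ : M, ‖Φs - Φ.1‖) ^ 2) ∧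
      P {ω | ‖Φs - ΦMN ω‖ ^ 2 > (1 + a) * (Γ / γ) * (⨅ Φ : M, ‖Φs - Φ.1‖) ^ 2} ≤
        P {ω | J (ΦMN ω) - J ΦM ≥ 1 / 2 * a * Γ * (⨅ Φ : M, ‖Φs - Φ.1‖) ^ 2} := by
  have hΓ0 : 0 ≤ Γ := le_trans (norm_nonneg (fderiv ℝ (fderiv ℝ J) 0)) (hΓ 0)
  set E : ℝ := ⨅ Φ : M, ‖Φs - Φ.1‖ with hE
  have hMne : Nonempty M := hM.to_subtype
  have hbdd : BddBelow (Set.range fun Φ : M => ‖Φs - Φ.1‖) :=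
    ⟨0, by rintro x ⟨Φ, rfl⟩; exact norm_nonneg _⟩
  have hE0 : 0 ≤ E := le_ciInf fun Φ => norm_nonneg _
  have hEle : ∀ Φ ∈ M, E ≤ ‖Φs - Φ‖ := fun Φ hΦ => ciInf_le hbdd ⟨Φ, hΦ⟩
  -- fderiv at global minimizer vanishes
  have hlm : IsLocalMin J Φs := Filter.Eventually.of_forall hmin
  have h0 : fderiv ℝ J Φs = 0 := hlm.fderiv_eq_zero
  have htay : ∀ Φ : V, J Φ ≤ J Φs + Γ / 2 * ‖Φ - Φs‖ ^ 2 :=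
    taylor_upper J Γ hJ hΓ Φs h0
  -- key : J ΦM - J Φs ≤ Γ/2 * E^2
  have hc0 : 0 ≤ J ΦM - J Φs := by linarith [hmin ΦM]
  have hkey : J ΦM - J Φs ≤ Γ / 2 * E ^ 2 := by
    rcases eq_or_lt_of_le hΓ0 with hΓz | hΓp
    · obtain ⟨Φ₀, hΦ₀⟩ := hM
      have := htay Φ₀
      have := hΦMmin Φ₀ hΦ₀
      rw [← hΓz] at *
      nlinarith
    · set c := J ΦM - J Φs with hcdef
      have hsqrt : Real.sqrt (2 * c / Γ) ≤ E := by
        apply le_ciInf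
        intro Φ
        have h1 : c ≤ Γ / 2 * ‖Φs - Φ.1‖ ^ 2 := by
          have := htay Φ.1
          have := hΦMmin Φ.1 Φ.2
          rw [norm_sub_rev]
          nlinarith
        have h2 : 2 * c / Γ ≤ ‖Φs - Φ.1‖ ^ 2 := by
          rw [div_le_iff₀ hΓp] at *
          nlinarith
        calc Real.sqrt (2 * c / Γ) ≤ Real.sqrt (‖Φs - Φ.1‖ ^ 2) := Real.sqrt_le_sqrt h2
          _ = ‖Φs - Φ.1‖ := Real.sqrt_sq (norm_nonneg _)
      have h3 : 2 * c / Γ ≤ E ^ 2 := by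
        have hnn : 0 ≤ 2 * c / Γ := by positivity
        calc 2 * c / Γ = Real.sqrt (2 * c / Γ) ^ 2 := (Real.sq_sqrt hnn).symm
          _ ≤ E ^ 2 := by nlinarith [Real.sqrt_nonneg (2 * c / Γ)]
      rw [div_le_iff₀ hΓp] at h3
      nlinarith
  -- pointwise implication
  have hpoint : ∀ ω, J (ΦMN ω) - J ΦM ≤ 1 / 2 * a * Γ * E ^ 2 →
      E ^ 2 ≤ ‖Φs - ΦMN ω‖ ^ 2 ∧
        ‖Φs - ΦMN ω‖ ^ 2 ≤ (1 + a) * (Γ / γ) * E ^ 2 := by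
    intro ω hω
    constructor
    · have h1 := hEle (ΦMN ω) (hΦMN ω)
      nlinarith [norm_nonneg (Φs - ΦMN ω)]
    · have hcv := hconv (ΦMN ω) (hΦMNU ω) Φs hΦsU
      rw [h0] at hcv
      simp only [ContinuousLinearMap.zero_apply] at hcv
      have hns : ‖ΦMN ω - Φs‖ = ‖Φs - ΦMN ω‖ := norm_sub_rev _ _
      rw [hns] at hcv
      have h4 : ‖Φs - ΦMN ω‖ ^ 2 ≤ (1 + a) * Γ * E ^ 2 / γ := by
        rw [le_div_iff₀ hγ]; nlinarith
      calc ‖Φs - ΦMN ω‖ ^ 2 ≤ (1 + a) * Γ * E ^ 2 / γ := h4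
        _ = (1 + a) * (Γ / γ) * E ^ 2 := by ring
  refine ⟨hpoint, ?_⟩
  apply measure_mono
  intro ω hω
  simp only [Set.mem_setOf_eq] at *
  by_contra hcon
  push_neg at hcon
  exact absurd (hpoint ω hcon.le).2 (not_le.mpr hω)
end
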